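/- Let d be an odd prime and ε = 2π/d. For q ≠ q' both in {1,...,d-1}, and any m, m' ∈ {0,...,d-1}, τ, τ' ∈ {±1}, and complex numbers β, β', the vectors v = N·(1/√d)∑_{j=0}^{d-1} e^{iχ_j}|jq⟩⊗(|+⟩ + β e^{2iqεj}|−⟩) and v' = N'·(1/√d)∑_{j=0}^{d-1} e^{iχ'_j}|jq'⟩⊗(|+⟩ + β' e^{2iq'εj}|−⟩), with χ_j = −(qε/2)j² + (mε+qπ)j, χ'_j = −(q'ε/2)j² + (m'ε+q'π)j, N = 1/√(1+|β|²), N' = 1/√(1+|β'|²), satisfy |⟨v'|v⟩| ≤ 1/√d. -/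

import Mathlib

open Real

/-- The quantum-walk eigenvector
`v = N (1/√d) ∑_j e^{iχ_j} |jq⟩ ⊗ (|+⟩ + β e^{2iqεj}|−⟩)` in `ℂ^d ⊗ ℂ²`,
with `χ_j = −(qε/2)j² + (mε+qπ)j`, `N = 1/√(1+|β|²)`, `ε = 2π/d`, and
`|k⟩ = (1/√d) ∑_x e^{ikεx}|x⟩`. -/
noncomputable def qwGenEigvec (d q m : ℕ) (β : ℂ) : EuclideanSpace ℂ (Fin d × Fin 2) :=
  WithLp.toLp 2 fun (p : Fin d × Fin 2) =>
    ((1 / Real.sqrt (1 + ‖β‖ ^ 2) : ℝ) : ℂ) * (1 / Real.sqrt d : ℝ) *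
      ∑ j ∈ Finset.range d,
        Complex.exp (Complex.I *
            ((-((q : ℝ) * (2 * Real.pi / d) / 2) * (j : ℝ) ^ 2
              + ((m : ℝ) * (2 * Real.pi / d) + (q : ℝ) * Real.pi) * (j : ℝ)))) *
          ((1 / Real.sqrt d : ℝ) *
            Complex.exp (Complex.I * ((j * q : ℕ) : ℝ) * (2 * Real.pi / d) * ((p.1 : ℕ) : ℝ))) *
          (if p.2 = 0 then 1
            else β * Complex.exp (2 * Complex.I * q * (2 * Real.pi / d) * (j : ℝ)))

/-!
For odd `d` the phase `χ_j` equals `(2π/d)(m j - q j²/2)` modulo `2π`, with `j²/2` computed in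
`ℤ/d`, so `e^{iχ_j} = ψ(m j - 2⁻¹ q j²)` for the standard additive character `ψ` of `ℤ/d`.
Substituting `l = jq` writes both vectors in the orthonormal basis `|l⟩ ⊗ |±⟩` with coefficients
`ψ(φ(l))` and `ψ(φ(l)) β ψ(2l)` where `φ` is quadratic. The spin factors `ψ(2l)` cancel in the
inner product, leaving `⟨v'|v⟩ = N N' (1 + β̄'β) d⁻¹ ∑_l ψ(A l² + B l)` with `A = (1/q' - 1/q)/2`,
which is nonzero since `q ≠ q'`. This quadratic Gauss sum has modulus `√d`, and
`|1 + β̄'β| ≤ 1 / (N N')` by Cauchy–Schwarz.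
-/

open Complex ComplexConjugate Finset ZMod

section
variable {M : Type*} [AddCommMonoid M] {d : ℕ} [NeZero d]

lemma sum_range_natCast_eq_sum_zmod (f : ZMod d → M) : ∑ j ∈ range d, f j = ∑ z, f z := by
  refine sum_nbij' (fun j => j) (fun z => z.val) ?_ ?_ ?_ ?_ ?_ <;> simp [ZMod.val_lt]
  exact fun j hj => Nat.mod_eq_of_lt hj

lemma sum_fin_natCast_eq_sum_zmod (f : ZMod d → M) : ∑ x : Fin d, f (x : ℕ) = ∑ z, f z := by
  rw [Fin.sum_univ_eq_sum_range (fun i => f i), sum_range_natCast_eq_sum_zmod]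

end

theorem norm_sum_addChar_quadratic {F : Type*} [Field F] [Fintype F] {ψ : AddChar F ℂ}
    (hψ : ψ.IsPrimitive) {a : F} (ha : 2 * a ≠ 0) (b : F) :
    ‖∑ x, ψ (a * x ^ 2 + b * x)‖ = √(Fintype.card F) := by
  classical
  set Q : F → F := fun x => a * x ^ 2 + b * x
  -- Weyl differencing: only `h = 0` survives the inner sum over `y`.
  have hshift (y h : F) : Q (y + h) - Q y = Q h + y * (2 * a * h) := by simp only [Q]; ring
  have hsq : ((‖∑ x, ψ (Q x)‖ ^ 2 : ℝ) : ℂ) = Fintype.card F :=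
    calc ((‖∑ x, ψ (Q x)‖ ^ 2 : ℝ) : ℂ) = ∑ y, ∑ x, ψ (Q x - Q y) := by
          rw [ofReal_pow, ← mul_conj', map_sum, sum_mul_sum, sum_comm]
          simp [sub_eq_add_neg, AddChar.map_add_eq_mul, AddChar.map_neg_eq_conj]
      _ = ∑ y, ∑ h, ψ (Q h) * ψ (y * (2 * a * h)) := by
          refine sum_congr rfl fun y _ => ?_
          rw [← Equiv.sum_comp (Equiv.addLeft y)]
          simp [hshift, AddChar.map_add_eq_mul]
      _ = ∑ h, ψ (Q h) * ∑ y, ψ (y * (2 * a * h)) := by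
          rw [sum_comm]; simp only [mul_sum]
      _ = Fintype.card F := by
          simp [AddChar.sum_mulShift _ hψ, ha, Q]
  rw [← Real.sqrt_sq (norm_nonneg _)]
  congr 1
  exact_mod_cast hsq

lemma norm_one_add_conj_mul_le (β β' : ℂ) :
    ‖1 + conj β' * β‖ ≤ √(1 + ‖β‖ ^ 2) * √(1 + ‖β'‖ ^ 2) :=
  calc ‖1 + conj β' * β‖ ≤ 1 + ‖β‖ * ‖β'‖ := by
        simpa [mul_comm] using norm_add_le 1 (conj β' * β)
    _ ≤ √(1 + ‖β‖ ^ 2) * √(1 + ‖β'‖ ^ 2) := by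
        rw [← Real.sqrt_mul (by positivity)]
        apply Real.le_sqrt_of_sq_le
        nlinarith [sq_nonneg (‖β‖ - ‖β'‖)]

lemma natCast_zmod_ne_zero_of_lt {d q : ℕ} (hq1 : 1 ≤ q) (hq : q < d) : (q : ZMod d) ≠ 0 := by
  rw [Ne, ZMod.natCast_eq_zero_iff]
  exact fun h => by have := Nat.le_of_dvd hq1 h; omega

section Fourier

variable {d : ℕ} [NeZero d]

lemma stdAddChar_natCast (n : ℕ) : stdAddChar (n : ZMod d) = cexp (2 * π * I * n / d) := by
  simpa using stdAddChar_coe (N := d) n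

lemma conj_stdAddChar (z : ZMod d) : conj (stdAddChar z) = stdAddChar (-z) :=
  (AddChar.map_neg_eq_conj _ _).symm

lemma sum_fin_conj_stdAddChar_mul [DecidableEq (ZMod d)] (l l' : ZMod d) :
    ∑ x : Fin d,
        conj (stdAddChar (l' * ((x : ℕ) : ZMod d))) * stdAddChar (l * ((x : ℕ) : ZMod d))
      = if l = l' then (d : ℂ) else 0 := by
  simp_rw [conj_stdAddChar, ← AddChar.map_add_eq_mul, ← neg_mul, ← add_mul,
    mul_comm _ (_ : ZMod d)]
  rw [sum_fin_natCast_eq_sum_zmod (fun x => stdAddChar (x * (-l' + l))),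
    AddChar.sum_mulShift _ (isPrimitive_stdAddChar d), ZMod.card]
  simp [neg_add_eq_zero, eq_comm]

lemma inner_eq_of_apply_eq_sum_stdAddChar {ι : Type*} [Fintype ι]
    {v v' : EuclideanSpace ℂ (Fin d × ι)} {F F' : ZMod d → ι → ℂ}
    (hv : ∀ p, v p = ∑ l, stdAddChar (l * ((p.1 : ℕ) : ZMod d)) * F l p.2)
    (hv' : ∀ p, v' p = ∑ l, stdAddChar (l * ((p.1 : ℕ) : ZMod d)) * F' l p.2) :
    inner ℂ v' v = d * ∑ l, ∑ i, conj (F' l i) * F l i := by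
  classical
  calc inner ℂ v' v
      = ∑ i, ∑ l', ∑ l, conj (F' l' i) * F l i * ∑ x : Fin d,
          conj (stdAddChar (l' * ((x : ℕ) : ZMod d))) * stdAddChar (l * ((x : ℕ) : ZMod d)) := by
        simp only [PiLp.inner_apply, RCLike.inner_apply, Fintype.sum_prod_type, hv, hv', map_sum,
          map_mul, sum_mul, mul_sum]
        rw [sum_comm]
        refine sum_congr rfl fun i _ => ?_
        rw [sum_comm]
        refine sum_congr rfl fun l' _ => ?_
        rw [sum_comm]
        refine sum_congr rfl fun l _ => sum_congr rfl fun x _ => ?_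
        ring
    _ = d * ∑ l, ∑ i, conj (F' l i) * F l i := by
        simp_rw [sum_fin_conj_stdAddChar_mul, mul_ite, mul_zero, sum_ite_eq', mem_univ, if_true,
          mul_sum]
        rw [sum_comm]
        exact sum_congr rfl fun _ _ => sum_congr rfl fun _ _ => by ring

end Fourier

/-- `χ_j / (2π/d)` modulo `d` (for odd `d`) at `j = l / q`, i.e. for the basis vector
`|l⟩ = |jq⟩`. -/
noncomputable def qwPhase {d : ℕ} (q m l : ZMod d) : ZMod d := q⁻¹ * (m * l - 2⁻¹ * l ^ 2)

lemma qwPhase_sub {d : ℕ} (q m q' m' l : ZMod d) :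
    qwPhase q m l - qwPhase q' m' l
      = 2⁻¹ * (q'⁻¹ - q⁻¹) * l ^ 2 + (q⁻¹ * m - q'⁻¹ * m') * l := by
  unfold qwPhase; ring

noncomputable def qwCoeff (d q m : ℕ) [NeZero d] (β : ℂ) (l : ZMod d) (s : Fin 2) : ℂ :=
  ((1 / √(1 + ‖β‖ ^ 2) / d : ℝ) : ℂ) * stdAddChar (qwPhase (q : ZMod d) m l) *
    if s = 0 then 1 else β * stdAddChar (2 * l)

section QuantumWalk

variable {d : ℕ} [Fact d.Prime]

lemma two_ne_zero_of_odd (hodd : Odd d) : (2 : ZMod d) ≠ 0 :=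
  Ring.two_ne_zero <| by
    rw [ZMod.ringChar_zmod_n]; rintro rfl; exact Nat.not_odd_iff_even.2 even_two hodd

lemma cexp_phase_eq_stdAddChar (hodd : Odd d) (q m j : ℕ) :
    cexp (I * ((-((q : ℝ) * (2 * π / d) / 2) * (j : ℝ) ^ 2
      + ((m : ℝ) * (2 * π / d) + (q : ℝ) * π) * (j : ℝ))))
      = stdAddChar (m * j - 2⁻¹ * q * j ^ 2 : ZMod d) := by
  -- the exponent is `(2π/d)(m j - q t)` with the integer `t = j (j - d) / 2 ≡ 2⁻¹ j² (mod d)`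
  obtain ⟨t, ht⟩ : Even ((j : ℤ) * (j - d)) := by
    have hd1 : Even ((d : ℤ) - 1) := (Int.odd_coe_nat d |>.2 hodd).sub_odd odd_one
    rw [show (j : ℤ) * (j - d) = j * (j - 1) - j * (d - 1) by ring]
    exact (Int.even_mul_pred_self j).sub (hd1.mul_left (j : ℤ))
  have ht_zmod : (t : ZMod d) = 2⁻¹ * j ^ 2 := by
    have := congrArg (Int.cast : ℤ → ZMod d) ht
    push_cast at this
    rw [ZMod.natCast_self, sub_zero] at this
    rw [eq_inv_mul_iff_mul_eq₀ (two_ne_zero_of_odd hodd)]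
    linear_combination -this
  have ht_complex : (t : ℂ) = ((j : ℂ) * (j - d)) / 2 := by
    have := congrArg (Int.cast : ℤ → ℂ) ht
    push_cast at this
    linear_combination -this / 2
  have hd : (d : ℂ) ≠ 0 := Nat.cast_ne_zero.2 (Fact.out : d.Prime).ne_zero
  rw [show (m * j - 2⁻¹ * q * j ^ 2 : ZMod d) = ((m * j - q * t : ℤ) : ZMod d) by
    push_cast; rw [ht_zmod]; ring, stdAddChar_coe]
  congr 1
  push_cast
  rw [ht_complex]
  field_simp
  ring

lemma qwGenEigvec_apply (hodd : Odd d) {q : ℕ} (hq : (q : ZMod d) ≠ 0) (m : ℕ) (β : ℂ)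
    (p : Fin d × Fin 2) :
    qwGenEigvec d q m β p =
      ∑ l, stdAddChar (l * ((p.1 : ℕ) : ZMod d)) * qwCoeff d q m β l p.2 := by
  rw [← Equiv.sum_comp (Equiv.mulLeft₀ (q : ZMod d) hq)]
  simp only [qwGenEigvec, WithLp.ofLp_toLp, mul_sum]
  rw [← sum_range_natCast_eq_sum_zmod]
  refine sum_congr rfl fun j _ => ?_
  have hbasis : cexp (I * ((j * q : ℕ) : ℝ) * (2 * π / d) * ((p.1 : ℕ) : ℝ))
      = stdAddChar (q * j * (p.1 : ℕ) : ZMod d) := by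
    rw [← Nat.cast_mul, ← Nat.cast_mul, stdAddChar_natCast]
    congr 1; push_cast; ring
  have hspin : cexp (2 * I * q * (2 * π / d) * (j : ℝ))
      = stdAddChar (2 * (q * j) : ZMod d) := by
    rw [show (2 * (q * j) : ZMod d) = ((2 * q * j : ℕ) : ZMod d) by push_cast; ring,
      stdAddChar_natCast]
    congr 1; push_cast; ring
  have hphase : qwPhase (q : ZMod d) m (q * j) = (m * j - 2⁻¹ * q * j ^ 2 : ZMod d) := by
    unfold qwPhase; field_simp
  have hscale : ((1 / √(1 + ‖β‖ ^ 2) / d : ℝ) : ℂ)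
      = ((1 / √(1 + ‖β‖ ^ 2) : ℝ) : ℂ) * ((1 / √d : ℝ) : ℂ) * ((1 / √d : ℝ) : ℂ) := by
    norm_cast
    rw [mul_assoc, one_div_mul_one_div, Real.mul_self_sqrt (Nat.cast_nonneg d)]
    ring
  rw [cexp_phase_eq_stdAddChar hodd, hbasis, hspin]
  simp only [Equiv.mulLeft₀_apply, qwCoeff, hphase, hscale]
  ring

lemma sum_conj_qwCoeff_mul (q q' m m' : ℕ) (β β' : ℂ) (l : ZMod d) :
    ∑ s, conj (qwCoeff d q' m' β' l s) * qwCoeff d q m β l s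
      = (((√(1 + ‖β‖ ^ 2) * √(1 + ‖β'‖ ^ 2) * d ^ 2)⁻¹ : ℝ) : ℂ) * (1 + conj β' * β) *
        stdAddChar (qwPhase (q : ZMod d) m l - qwPhase (q' : ZMod d) m' l) := by
  have hphase : stdAddChar (qwPhase (q : ZMod d) m l - qwPhase (q' : ZMod d) m' l)
      = stdAddChar (-qwPhase (q' : ZMod d) m' l) * stdAddChar (qwPhase (q : ZMod d) m l) := by
    rw [← AddChar.map_add_eq_mul, neg_add_eq_sub]
  have hspin : stdAddChar (-(2 * l)) * stdAddChar (2 * l) = 1 := by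
    rw [← AddChar.map_add_eq_mul, neg_add_cancel, AddChar.map_zero_eq_one]
  have hscale : ((1 / √(1 + ‖β'‖ ^ 2) / d : ℝ) : ℂ) * ((1 / √(1 + ‖β‖ ^ 2) / d : ℝ) : ℂ)
      = (((√(1 + ‖β‖ ^ 2) * √(1 + ‖β'‖ ^ 2) * d ^ 2)⁻¹ : ℝ) : ℂ) := by
    push_cast; field_simp
  simp only [Fin.sum_univ_two, qwCoeff, map_mul, conj_ofReal, conj_stdAddChar, if_pos,
    if_neg (show (1 : Fin 2) ≠ 0 by decide), map_one, hphase, ← hscale]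
  linear_combination (((1 / √(1 + ‖β'‖ ^ 2) / d : ℝ) : ℂ) * ((1 / √(1 + ‖β‖ ^ 2) / d : ℝ) : ℂ) *
    conj β' * β * stdAddChar (-qwPhase (q' : ZMod d) m' l) *
    stdAddChar (qwPhase (q : ZMod d) m l)) * hspin

lemma inner_qwGenEigvec (hodd : Odd d) {q q' : ℕ} (hq : (q : ZMod d) ≠ 0)
    (hq' : (q' : ZMod d) ≠ 0) (m m' : ℕ) (β β' : ℂ) :
    inner ℂ (qwGenEigvec d q' m' β') (qwGenEigvec d q m β)
      = (((√(1 + ‖β‖ ^ 2) * √(1 + ‖β'‖ ^ 2) * d)⁻¹ : ℝ) : ℂ) * (1 + conj β' * β) *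
        ∑ l, stdAddChar (qwPhase (q : ZMod d) m l - qwPhase (q' : ZMod d) m' l) := by
  rw [inner_eq_of_apply_eq_sum_stdAddChar (qwGenEigvec_apply hodd hq m β)
    (qwGenEigvec_apply hodd hq' m' β')]
  simp_rw [sum_conj_qwCoeff_mul, ← mul_sum]
  have hd : (d : ℝ) ≠ 0 := Nat.cast_ne_zero.2 (Fact.out : d.Prime).ne_zero
  push_cast
  field_simp

end QuantumWalk

theorem qw_eigvec_overlap_bound_general (d : ℕ) (hd : d.Prime) (hodd : Odd d)
    (q q' m m' : ℕ) (hq1 : 1 ≤ q) (hq : q < d) (hq'1 : 1 ≤ q') (hq' : q' < d)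
    (hne : q ≠ q') (β β' : ℂ) :
    ‖(inner ℂ (qwGenEigvec d q' m' β') (qwGenEigvec d q m β) : ℂ)‖
      ≤ 1 / Real.sqrt d := by
  have := Fact.mk hd
  have hA : 2 * (2⁻¹ * ((q' : ZMod d)⁻¹ - (q : ZMod d)⁻¹)) ≠ 0 := by
    rw [← mul_assoc, mul_inv_cancel₀ (two_ne_zero_of_odd hodd), one_mul, sub_ne_zero, Ne,
      inv_inj, ZMod.natCast_eq_natCast_iff', Nat.mod_eq_of_lt hq, Nat.mod_eq_of_lt hq']
    exact hne.symm
  set C := √(1 + ‖β‖ ^ 2) * √(1 + ‖β'‖ ^ 2)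
  have hC : 0 < C := by positivity
  have hd0 : (0 : ℝ) < d := Nat.cast_pos.2 hd.pos
  rw [inner_qwGenEigvec hodd (natCast_zmod_ne_zero_of_lt hq1 hq)
      (natCast_zmod_ne_zero_of_lt hq'1 hq'),
    norm_mul, norm_mul, Complex.norm_of_nonneg (by positivity)]
  simp_rw [qwPhase_sub]
  rw [norm_sum_addChar_quadratic (isPrimitive_stdAddChar d) hA, ZMod.card]
  calc (C * d)⁻¹ * ‖1 + conj β' * β‖ * √d ≤ (C * d)⁻¹ * C * √d := by
        gcongr; exact norm_one_add_conj_mul_le β β'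
    _ = 1 / √d := by
        field_simp
        rw [Real.sq_sqrt hd0.le]

theorem qw_eigvec_overlap_bound (d : ℕ) (hd : d.Prime) (hodd : Odd d)
    (q q' m m' : ℕ) (hq1 : 1 ≤ q) (hq : q < d) (hq'1 : 1 ≤ q') (hq' : q' < d)
    (hm : m < d) (hm' : m' < d) (hne : q ≠ q')
    (τ τ' : ℤ) (hτ : τ = 1 ∨ τ = -1) (hτ' : τ' = 1 ∨ τ' = -1)
    (β β' : ℂ) :
    ‖(inner ℂ (qwGenEigvec d q' m' β') (qwGenEigvec d q m β) : ℂ)‖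
      ≤ 1 / Real.sqrt d :=
  qw_eigvec_overlap_bound_general d hd hodd q q' m m' hq1 hq hq'1 hq' hne β β'
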